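/- arXiv:1906.09224 — 7 statements merged into one kernel-verified Lean document; each statement's English description precedes it below -/
import Mathlib

section
/- Every finite partial order P of width 2 has order dimension at most 2. -/
/-!
Color the elements with two colors so that incomparable elements get different colors
(equivalently, cover the order by two chains: Dilworth's theorem for width 2). Such a coloring
is built by Perles' induction. An incomparable pair `a, b` whose down-set and up-set are both
proper splits the order into the smaller pieces `↓{a, b}` and `↑{a, b}`, which cover it since
there is no antichain of size 3; colorings of the pieces glue once they agree at `a`. If no pair
splits, every incomparable pair consists of the two maximal or of the two minimal elements, so a
chain from a minimal to a maximal element and its complement form the two color classes.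
Given the coloring, ordering every incomparable pair with the element of color `c` first is a
linear extension for each `c`, and the two extensions intersect in the original order.
-/

section

variable {α : Type*} [PartialOrder α]

lemma comparable_of_incompRel_of_width_le_two
    (hw : ∀ s : Finset α, IsAntichain (· ≤ ·) (s : Set α) → s.card ≤ 2)
    {a b : α} (hab : IncompRel (· ≤ ·) a b) (z : α) :
    (z ≤ a ∨ z ≤ b) ∨ (a ≤ z ∨ b ≤ z) := by
  classical
  by_contra! h
  obtain ⟨⟨hza, hzb⟩, haz, hbz⟩ := h
  have hanti : IsAntichain (· ≤ ·) (({z, a, b} : Finset α) : Set α) := by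
    simp only [Finset.coe_insert, Finset.coe_singleton, isAntichain_insert, Set.mem_insert_iff,
      Set.mem_singleton_iff]
    simp_all [IncompRel]
  have hcard : ({z, a, b} : Finset α).card = 3 :=
    Finset.card_eq_three.2 ⟨z, a, b, ne_of_not_le hza, ne_of_not_le hzb, hab.ne, rfl⟩
  have := hw _ hanti
  omega

private lemma Bool.eq_of_ne_of_ne {a b c : Bool} (ha : a ≠ c) (hb : b ≠ c) : a = b := by
  cases a <;> cases b <;> cases c <;> simp_all

def IsChainColoring (s : Finset α) (f : α → Bool) : Prop :=
  ∀ x ∈ s, ∀ y ∈ s, IncompRel (· ≤ ·) x y → f x ≠ f y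

namespace IsChainColoring

variable {s : Finset α} {f g : α → Bool}

lemma apply_eq_of_incompRel (hf : IsChainColoring s f) {x y z : α} (hx : x ∈ s) (hy : y ∈ s)
    (hz : z ∈ s) (hxz : IncompRel (· ≤ ·) x z) (hyz : IncompRel (· ≤ ·) y z) : f x = f y :=
  Bool.eq_of_ne_of_ne (hf x hx z hz hxz) (hf y hy z hz hyz)

lemma exists_apply_eq (hf : IsChainColoring s f) (a : α) (c : Bool) :
    ∃ g, IsChainColoring s g ∧ g a = c := by
  by_cases hfa : f a = c
  · exact ⟨f, hf, hfa⟩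
  · refine ⟨fun x => !f x, fun x hx y hy hxy => ?_, ?_⟩
    · simpa using hf x hx y hy hxy
    · cases f a <;> cases c <;> simp_all

lemma ne_of_le_of_ge {D U : Finset α} (hf : IsChainColoring D f) (hg : IsChainColoring U g)
    {c d x y : α} (hc : c ∈ s) (hd : d ∈ s) (hx : x ∈ s) (hy : y ∈ s)
    (hD : ∀ z ∈ s, z ≤ c ∨ z ≤ d → z ∈ D) (hU : ∀ z ∈ s, c ≤ z ∨ d ≤ z → z ∈ U)
    (hcd : IncompRel (· ≤ ·) c d) (hfg : f d = g d)
    (hxc : x ≤ c) (hdy : d ≤ y) (hyc : ¬y ≤ c) (hxy : IncompRel (· ≤ ·) x y) : f x ≠ g y := by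
  have hxd : IncompRel (· ≤ ·) x d :=
    ⟨fun h => hxy.not_le (h.trans hdy), fun h => hcd.not_ge (h.trans hxc)⟩
  have hyc : IncompRel (· ≤ ·) y c := ⟨hyc, fun h => hxy.not_le (hxc.trans h)⟩
  have hcD := hD c hc (.inl le_rfl)
  have hdD := hD d hd (.inr le_rfl)
  have hfx : f x = f c := hf.apply_eq_of_incompRel (hD x hx (.inl hxc)) hcD hdD hxd hcd
  have hgy : g y = g d := hg.apply_eq_of_incompRel (hU y hy (.inr hdy)) (hU d hd (.inr le_rfl))
    (hU c hc (.inl le_rfl)) hyc hcd.symm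
  rw [hfx, hgy, ← hfg]
  exact hf c hcD d hdD hcd

variable [DecidableRel (α := α) (· ≤ ·)]

lemma glue (hw : ∀ s : Finset α, IsAntichain (· ≤ ·) (s : Set α) → s.card ≤ 2)
    {a b : α} (ha : a ∈ s) (hb : b ∈ s) (hab : IncompRel (· ≤ ·) a b)
    (hf : IsChainColoring (s.filter fun z => z ≤ a ∨ z ≤ b) f)
    (hg : IsChainColoring (s.filter fun z => a ≤ z ∨ b ≤ z) g) (hfg : f a = g a) :
    IsChainColoring s fun z => if z ≤ a ∨ z ≤ b then f z else g z := by
  have hfgb : f b = g b := Bool.eq_of_ne_of_ne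
    (hf b (by simp [hb]) a (by simp [ha]) hab.symm)
    (hfg ▸ hg b (by simp [hb]) a (by simp [ha]) hab.symm)
  have hU : ∀ z ∈ s, ¬(z ≤ a ∨ z ≤ b) → z ∈ s.filter fun z => a ≤ z ∨ b ≤ z := fun z hz h =>
    Finset.mem_filter.2 ⟨hz, (comparable_of_incompRel_of_width_le_two hw hab z).resolve_left h⟩
  have cross : ∀ x ∈ s, ∀ y ∈ s, (x ≤ a ∨ x ≤ b) → ¬(y ≤ a ∨ y ≤ b) →
      IncompRel (· ≤ ·) x y → f x ≠ g y := by
    intro x hx y hy hxD hyD hxy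
    have hyU := (Finset.mem_filter.1 (hU y hy hyD)).2
    push Not at hyD
    rcases hxD with hxa | hxb
    · refine ne_of_le_of_ge hf hg ha hb hx hy (fun z hz h => Finset.mem_filter.2 ⟨hz, h⟩)
        (fun z hz h => Finset.mem_filter.2 ⟨hz, h⟩) hab hfgb hxa ?_ hyD.1 hxy
      exact hyU.resolve_left fun h => hxy.not_le (hxa.trans h)
    · refine ne_of_le_of_ge hf hg hb ha hx hy (fun z hz h => Finset.mem_filter.2 ⟨hz, h.symm⟩)
        (fun z hz h => Finset.mem_filter.2 ⟨hz, h.symm⟩) hab.symm hfg hxb ?_ hyD.2 hxy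
      exact hyU.resolve_right fun h => hxy.not_le (hxb.trans h)
  intro x hx y hy hxy
  by_cases hxD : x ≤ a ∨ x ≤ b <;> by_cases hyD : y ≤ a ∨ y ≤ b <;>
    simp only [hxD, hyD, if_true, if_false]
  · exact hf x (Finset.mem_filter.2 ⟨hx, hxD⟩) y (Finset.mem_filter.2 ⟨hy, hyD⟩) hxy
  · exact cross x hx y hy hxD hyD hxy
  · exact (cross y hy x hx hyD hxD hxy.symm).symm
  · exact hg x (hU x hx hxD) y (hU y hy hyD) hxy

end IsChainColoring

lemma exists_isChainColoring_of_forall_incompRel {s : Finset α}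
    (hs : ∀ a ∈ s, ∀ b ∈ s, IncompRel (· ≤ ·) a b →
      (∀ z ∈ s, z ≤ a ∨ z ≤ b) ∨ ∀ z ∈ s, a ≤ z ∨ b ≤ z) :
    ∃ f, IsChainColoring s f := by
  classical
  rcases s.eq_empty_or_nonempty with rfl | hne
  · exact ⟨fun _ => false, by simp [IsChainColoring]⟩
  obtain ⟨x, hx⟩ := Finset.exists_minimal hne
  obtain ⟨y, hxy, hy⟩ := s.exists_le_maximal hx.1
  refine ⟨fun z => decide (z = x ∨ z = y), fun u hu v hv huv => ?_⟩
  have hboth : ¬((u = x ∨ u = y) ∧ (v = x ∨ v = y)) := by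
    rintro ⟨rfl | rfl, rfl | rfl⟩ <;> simp_all [IncompRel]
  have hone : (u = x ∨ u = y) ∨ (v = x ∨ v = y) := by
    rcases hs u hu v hv huv with h | h
    · exact (h y hy.1).imp (fun h => .inr (hy.eq_of_le hu h).symm)
        (fun h => .inr (hy.eq_of_le hv h).symm)
    · exact (h x hx.1).imp (fun h => .inl (hx.eq_of_le hu h)) (fun h => .inl (hx.eq_of_le hv h))
  simp only [ne_eq, decide_eq_decide]
  tauto

theorem exists_isChainColoring
    (hw : ∀ s : Finset α, IsAntichain (· ≤ ·) (s : Set α) → s.card ≤ 2) (s : Finset α) :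
    ∃ f, IsChainColoring s f := by
  classical
  induction s using Finset.strongInduction with
  | H s ih =>
  by_cases hs : ∀ a ∈ s, ∀ b ∈ s, IncompRel (· ≤ ·) a b →
      (∀ z ∈ s, z ≤ a ∨ z ≤ b) ∨ ∀ z ∈ s, a ≤ z ∨ b ≤ z
  · exact exists_isChainColoring_of_forall_incompRel hs
  push Not at hs
  obtain ⟨a, ha, b, hb, hab, ⟨u, hu, hua, hub⟩, v, hv, hav, hbv⟩ := hs
  obtain ⟨f, hf⟩ := ih (s.filter fun z => z ≤ a ∨ z ≤ b)
    (Finset.filter_ssubset.2 ⟨u, hu, by tauto⟩)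
  obtain ⟨g, hg⟩ := ih (s.filter fun z => a ≤ z ∨ b ≤ z)
    (Finset.filter_ssubset.2 ⟨v, hv, by tauto⟩)
  obtain ⟨g, hg, hga⟩ := hg.exists_apply_eq a (f a)
  exact ⟨_, hf.glue hw ha hb hab hg hga.symm⟩

def colorFirst (f : α → Bool) (c : Bool) (x y : α) : Prop :=
  x ≤ y ∨ IncompRel (· ≤ ·) x y ∧ f x = c

section colorFirst

variable {f : α → Bool} {c : Bool}

lemma colorFirst_trans (hf : ∀ x y : α, IncompRel (· ≤ ·) x y → f x ≠ f y) {x y z : α} :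
    colorFirst f c x y → colorFirst f c y z → colorFirst f c x z := by
  rintro (hxy | ⟨hxy, rfl⟩) (hyz | ⟨hyz, hfy⟩)
  · exact .inl (hxy.trans hyz)
  · by_cases hxz : x ≤ z
    · exact .inl hxz
    have hxz' : IncompRel (· ≤ ·) x z := ⟨hxz, fun h => hyz.not_ge (h.trans hxy)⟩
    exact .inr ⟨hxz', (Bool.eq_of_ne_of_ne (hf x z hxz') (hf y z hyz)).trans hfy⟩
  · by_cases hxz : x ≤ z
    · exact .inl hxz
    exact .inr ⟨⟨hxz, fun h => hxy.not_ge (hyz.trans h)⟩, rfl⟩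
  · exact absurd hfy.symm (hf x y hxy)

lemma isLinearOrder_colorFirst (hf : ∀ x y : α, IncompRel (· ≤ ·) x y → f x ≠ f y) (c : Bool) :
    IsLinearOrder α (colorFirst f c) where
  refl _ := .inl le_rfl
  trans _ _ _ := colorFirst_trans hf
  antisymm x y := by
    rintro (hxy | ⟨hxy, hx⟩) (hyx | ⟨hyx, hy⟩)
    · exact le_antisymm hxy hyx
    · exact absurd hxy hyx.not_ge
    · exact absurd hyx hxy.not_ge
    · exact absurd (hx.trans hy.symm) (hf x y hxy)
  total x y := by
    by_cases hxy : x ≤ y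
    · exact .inl (.inl hxy)
    by_cases hyx : y ≤ x
    · exact .inr (.inl hyx)
    have h : IncompRel (· ≤ ·) x y := ⟨hxy, hyx⟩
    by_cases hx : f x = c
    · exact .inl (.inr ⟨h, hx⟩)
    · exact .inr (.inr ⟨h.symm, Bool.eq_of_ne_of_ne (hf y x h.symm) (Ne.symm hx)⟩)

lemma le_of_colorFirst_of_colorFirst {c' : Bool} (hc : c ≠ c') {x y : α}
    (h : colorFirst f c x y) (h' : colorFirst f c' x y) : x ≤ y := by
  rcases h with h | ⟨-, h⟩
  · exact h
  rcases h' with h' | ⟨-, h'⟩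
  · exact h'
  exact absurd (h.symm.trans h') hc

end colorFirst

end

/-- Every finite partial order of width 2 has order dimension at most 2. -/
theorem stmt_2 (α : Type*) [Fintype α] [PartialOrder α]
    (hw : ∀ s : Finset α, IsAntichain (· ≤ ·) (s : Set α) → s.card ≤ 2) :
    ∃ L : Fin 2 → α → α → Prop,
      (∀ i, IsLinearOrder α (L i)) ∧
      ∀ x y : α, x ≤ y ↔ ∀ i, L i x y := by
  obtain ⟨f, hf⟩ := exists_isChainColoring hw Finset.univ
  have hf' : ∀ x y : α, IncompRel (· ≤ ·) x y → f x ≠ f y := fun x y =>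
    hf x (Finset.mem_univ x) y (Finset.mem_univ y)
  refine ⟨fun i => colorFirst f (i = 1), fun i => isLinearOrder_colorFirst hf' _,
    fun x y => ⟨fun h i => .inl h, fun h => ?_⟩⟩
  exact le_of_colorFirst_of_colorFirst Bool.false_ne_true (h 0) (h 1)
end

section
/- For every finite partial order P, the order dimension of P is at most the width of P. -/
/-!
By Dilworth's theorem α is covered by `w` chains. For a chain `C`, ordering α lexicographically
by the number of elements of `C` that are not above `x`, and then by a fixed linear extension,
gives a linear extension in which every element of `C` precedes everything that is not below it.
If `x ≰ y`, the extension attached to a chain through `y` puts `y` strictly before `x`.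

Dilworth's theorem is proved by Perles' induction. Remove a chain `m ≤ M` from a minimal to a
maximal element. If the width drops, induct. Otherwise a maximum antichain `A` avoiding `m` and `M`
splits the order into its down-set and its up-set, both proper (they miss `M`, resp. `m`). In a
cover of either part by `#A` chains each chain meets `A` exactly once, so the covers glue along `A`.
-/

open Finset

section Dilworth

variable {α ι : Type*} [PartialOrder α]

structure IsChainCover (s : Finset α) (c : ι → Finset α) : Prop where
  subset : ∀ i, c i ⊆ s
  isChain : ∀ i, IsChain (· ≤ ·) (c i : Set α)
  cover : ∀ x ∈ s, ∃ i, x ∈ c i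

theorem IsChainCover.cons [DecidableEq α] {s C : Finset α} {k : ℕ} {c : Fin k → Finset α}
    (hc : IsChainCover (s \ C) c) (hCs : C ⊆ s) (hC : IsChain (· ≤ ·) (C : Set α)) :
    IsChainCover s (Fin.cons C c : Fin (k + 1) → Finset α) where
  subset := Fin.cases hCs fun i => (hc.subset i).trans sdiff_subset
  isChain := Fin.cases hC hc.isChain
  cover x hx := by
    by_cases hxC : x ∈ C
    · exact ⟨0, hxC⟩
    · obtain ⟨i, hi⟩ := hc.cover x (mem_sdiff.2 ⟨hx, hxC⟩)
      exact ⟨i.succ, by simpa using hi⟩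

theorem IsChain.le_of_mem_isAntichain {c A : Set α} (hc : IsChain (· ≤ ·) c)
    (hA : IsAntichain (· ≤ ·) A) {a a' x : α} (ha : a ∈ A) (hac : a ∈ c) (ha' : a' ∈ A)
    (hx : x ∈ c) (hxa' : x ≤ a') : x ≤ a :=
  (hc.total hx hac).elim id fun hax => hA.eq ha ha' (hax.trans hxa') ▸ hxa'

theorem IsChain.ge_of_mem_isAntichain {c A : Set α} (hc : IsChain (· ≤ ·) c)
    (hA : IsAntichain (· ≤ ·) A) {a a' x : α} (ha : a ∈ A) (hac : a ∈ c) (ha' : a' ∈ A)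
    (hx : x ∈ c) (hax : a' ≤ x) : a ≤ x :=
  (hc.total hac hx).elim id fun hxa => hA.eq ha' ha (hax.trans hxa) ▸ hax

/-- Pigeonhole: distinct elements of `A` lie in distinct chains, so with at most `#A` chains
every chain is hit. -/
theorem exists_eq_of_mem_isChain [Fintype ι] {c : ι → Finset α}
    (hc : ∀ i, IsChain (· ≤ ·) (c i : Set α)) {A : Finset α} (hA : IsAntichain (· ≤ ·) (A : Set α))
    (hcard : Fintype.card ι ≤ #A) (φ : ∀ a ∈ A, ι) (hφ : ∀ a ha, a ∈ c (φ a ha)) (i : ι) :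
    ∃ a ha, φ a ha = i := by
  have hinj : ∀ a₁ a₂ ha₁ ha₂, φ a₁ ha₁ = φ a₂ ha₂ → a₁ = a₂ := fun a₁ a₂ ha₁ ha₂ h =>
    inter_subsingleton_of_isChain_of_isAntichain (hc _) hA ⟨hφ a₁ ha₁, ha₁⟩
      ⟨h ▸ hφ a₂ ha₂, ha₂⟩
  obtain ⟨a, ha, h⟩ := surj_on_of_inj_on_of_card_le φ (fun _ _ => mem_univ _) hinj
    (by rwa [card_univ]) i (mem_univ i)
  exact ⟨a, ha, h.symm⟩

theorem IsChainCover.union [DecidableEq α] [Fintype ι] {A D U : Finset α} {cD cU : ι → Finset α}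
    (hD : IsChainCover D cD) (hU : IsChainCover U cU) (hA : IsAntichain (· ≤ ·) (A : Set α))
    (hcard : Fintype.card ι ≤ #A) (hAD : A ⊆ D) (hAU : A ⊆ U) (hDA : ∀ x ∈ D, ∃ a ∈ A, x ≤ a)
    (hUA : ∀ x ∈ U, ∃ a ∈ A, a ≤ x) : ∃ c : ι → Finset α, IsChainCover (D ∪ U) c := by
  choose φD hφD using fun a (ha : a ∈ A) => hD.cover a (hAD ha)
  choose φU hφU using fun a (ha : a ∈ A) => hU.cover a (hAU ha)
  choose top htopA htop using exists_eq_of_mem_isChain hD.isChain hA hcard φD hφD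
  have htop_mem : ∀ i, top i ∈ cD i := fun i => by simpa only [htop] using hφD _ (htopA i)
  have hle : ∀ i, ∀ x ∈ cD i, x ≤ top i := fun i x hx => by
    obtain ⟨a', ha', hxa'⟩ := hDA x (hD.subset i hx)
    exact (hD.isChain i).le_of_mem_isAntichain hA (htopA i) (htop_mem i) ha' hx hxa'
  have hge : ∀ i, ∀ y ∈ cU (φU (top i) (htopA i)), top i ≤ y := fun i y hy => by
    obtain ⟨a', ha', hay⟩ := hUA y (hU.subset _ hy)
    exact (hU.isChain _).ge_of_mem_isAntichain hA (htopA i) (hφU _ _) ha' hy hay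
  refine ⟨fun i => cD i ∪ cU (φU (top i) (htopA i)),
    ⟨fun i => union_subset_union (hD.subset i) (hU.subset _), fun i => ?_, fun x hx => ?_⟩⟩
  · rw [coe_union, isChain_union]
    exact ⟨hD.isChain i, hU.isChain _,
      fun x hx y hy _ => .inl ((hle i x hx).trans (hge i y hy))⟩
  rcases mem_union.1 hx with hx | hx
  · obtain ⟨i, hi⟩ := hD.cover x hx
    exact ⟨i, mem_union_left _ hi⟩
  obtain ⟨j, hj⟩ := hU.cover x hx
  obtain ⟨a, ha, rfl⟩ := exists_eq_of_mem_isChain hU.isChain hA hcard φU hφU j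
  have htop_eq : top (φD a ha) = a :=
    inter_subsingleton_of_isChain_of_isAntichain (hD.isChain _) hA
      ⟨htop_mem _, htopA _⟩ ⟨hφD a ha, ha⟩
  have key : ∀ b hb, b = a → x ∈ cU (φU b hb) := by rintro b hb rfl; exact hj
  exact ⟨φD a ha, mem_union_right _ (key _ _ htop_eq)⟩

theorem IsAntichain.exists_comparable_of_forall_card_le [DecidableEq α] {s A : Finset α}
    (hA : IsAntichain (· ≤ ·) (A : Set α)) (hAs : A ⊆ s)
    (hmax : ∀ t ⊆ s, IsAntichain (· ≤ ·) (t : Set α) → #t ≤ #A) {x : α} (hx : x ∈ s) :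
    ∃ a ∈ A, x ≤ a ∨ a ≤ x := by
  by_contra! h
  have hxA : x ∉ A := fun hxA => (h x hxA).1 le_rfl
  have hxA' : IsAntichain (· ≤ ·) ((insert x A : Finset α) : Set α) := by
    rw [coe_insert]
    exact hA.insert (fun b hb _ => (h b hb).2) (fun b hb _ => (h b hb).1)
  have := hmax _ (insert_subset hx hAs) hxA'
  rw [card_insert_of_notMem hxA] at this
  omega

theorem IsChainCover.of_isAntichain [DecidableEq α] [DecidableLE α] [Fintype ι]
    {s A : Finset α} {cD cU : ι → Finset α} (hA : IsAntichain (· ≤ ·) (A : Set α)) (hAs : A ⊆ s)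
    (hmax : ∀ t ⊆ s, IsAntichain (· ≤ ·) (t : Set α) → #t ≤ #A) (hcard : Fintype.card ι ≤ #A)
    (hD : IsChainCover {x ∈ s | ∃ a ∈ A, x ≤ a} cD)
    (hU : IsChainCover {x ∈ s | ∃ a ∈ A, a ≤ x} cU) :
    ∃ c : ι → Finset α, IsChainCover s c := by
  have hs : {x ∈ s | ∃ a ∈ A, x ≤ a} ∪ {x ∈ s | ∃ a ∈ A, a ≤ x} = s := by
    rw [← filter_or, filter_true_of_mem fun x hx => ?_]
    obtain ⟨a, ha, hxa | hax⟩ := hA.exists_comparable_of_forall_card_le hAs hmax hx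
    exacts [.inl ⟨a, ha, hxa⟩, .inr ⟨a, ha, hax⟩]
  exact hs ▸ hD.union hU hA hcard (fun a ha => mem_filter.2 ⟨hAs ha, a, ha, le_rfl⟩)
    (fun a ha => mem_filter.2 ⟨hAs ha, a, ha, le_rfl⟩) (fun _ hx => (mem_filter.1 hx).2)
    (fun _ hx => (mem_filter.1 hx).2)

theorem exists_chainCover_of_forall_antichain_card_le (s : Finset α) (k : ℕ)
    (hk : ∀ t ⊆ s, IsAntichain (· ≤ ·) (t : Set α) → #t ≤ k) :
    ∃ c : Fin k → Finset α, IsChainCover s c := by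
  classical
  induction s using Finset.strongInduction generalizing k with
  | H s ih =>
  obtain rfl | ⟨x, hx⟩ := s.eq_empty_or_nonempty
  · exact ⟨fun _ => ∅, fun _ => subset_rfl, fun _ => by simp, by simp⟩
  obtain ⟨m, -, hm⟩ := s.exists_le_minimal hx
  obtain ⟨M, hmM, hM⟩ := s.exists_le_maximal hm.prop
  have hCs : {m, M} ⊆ s := insert_subset hm.prop (singleton_subset_iff.2 hM.prop)
  by_cases hlarge : ∃ A ⊆ s \ {m, M}, IsAntichain (· ≤ ·) (A : Set α) ∧ k ≤ #A
  · obtain ⟨A, hAsC, hA, hkA⟩ := hlarge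
    have hAs : A ⊆ s := hAsC.trans sdiff_subset
    have hAk : #A = k := le_antisymm (hk A hAs hA) hkA
    have hMD : ¬∃ a ∈ A, M ≤ a := fun ⟨a, ha, hMa⟩ =>
      (mem_sdiff.1 (hAsC ha)).2 (hM.eq_of_le (hAs ha) hMa ▸ by simp)
    have hmU : ¬∃ a ∈ A, a ≤ m := fun ⟨a, ha, ham⟩ =>
      (mem_sdiff.1 (hAsC ha)).2 (hm.eq_of_ge (hAs ha) ham ▸ by simp)
    obtain ⟨cD, hcD⟩ := ih {x ∈ s | ∃ a ∈ A, x ≤ a} (filter_ssubset.2 ⟨M, hM.prop, hMD⟩) k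
      fun t ht => hk t (ht.trans (filter_subset _ _))
    obtain ⟨cU, hcU⟩ := ih {x ∈ s | ∃ a ∈ A, a ≤ x} (filter_ssubset.2 ⟨m, hm.prop, hmU⟩) k
      fun t ht => hk t (ht.trans (filter_subset _ _))
    exact hcD.of_isAntichain hA hAs (hAk ▸ hk) (by simp [hAk]) hcU
  · push Not at hlarge
    obtain ⟨k, rfl⟩ : ∃ k', k = k' + 1 :=
      Nat.exists_eq_add_one.2 (hk {x} (singleton_subset_iff.2 hx) (by simp))
    obtain ⟨c, hc⟩ := ih _ (sdiff_ssubset hCs (insert_nonempty _ _)) k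
      fun t ht hta => Nat.lt_succ_iff.1 (hlarge t ht hta)
    exact ⟨Fin.cons {m, M} c, hc.cons hCs (by simpa using IsChain.pair hmM)⟩

end Dilworth

section LinearExtension

variable {α : Type*} [PartialOrder α] {c : Finset α}

open Classical in
noncomputable def chainRank (c : Finset α) (x : α) : ℕ := #{z ∈ c | ¬x ≤ z}

theorem chainRank_mono (c : Finset α) : Monotone (chainRank c) := fun _ _ hxy => by
  classical
  exact card_le_card (monotone_filter_right c fun _ _ hz h => hz (hxy.trans h))

theorem chainRank_lt_of_mem (hc : IsChain (· ≤ ·) (c : Set α)) {x y : α} (hx : x ∈ c)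
    (hyx : ¬y ≤ x) : chainRank c x < chainRank c y := by
  classical
  refine card_lt_card ((ssubset_iff_of_subset fun z hz => ?_).2 ⟨x, ?_, ?_⟩)
  · rw [mem_filter] at hz ⊢
    exact ⟨hz.1, fun hyz => (hc.total hz.1 hx).elim (fun hzx => hyx (hyz.trans hzx)) hz.2⟩
  · exact mem_filter.2 ⟨hx, hyx⟩
  · exact fun h => (mem_filter.1 h).2 le_rfl

theorem IsChain.exists_linearExtension (hc : IsChain (· ≤ ·) (c : Set α)) :
    ∃ r : α → α → Prop, IsLinearOrder α r ∧ (∀ x y, x ≤ y → r x y) ∧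
      ∀ x ∈ c, ∀ y, ¬y ≤ x → ¬r y x := by
  let f : α ↪ ℕ ×ₗ LinearExtension α :=
    ⟨fun x => toLex (chainRank c x, toLinearExtension x), fun x y h =>
      congrArg (fun p => (ofLex p).2) h⟩
  refine ⟨f ⁻¹'o (· ≤ ·), (RelEmbedding.preimage f _).isLinearOrder, fun x y hxy => ?_,
    fun x hx y hyx => _root_.not_le.2 ?_⟩
  · exact Prod.Lex.toLex_mono ⟨chainRank_mono c hxy, toLinearExtension.monotone hxy⟩
  · exact Prod.Lex.toLex_lt_toLex.2 (.inl (chainRank_lt_of_mem hc hx hyx))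

end LinearExtension

/-- For a finite partial order, the order dimension is at most the width:
if every antichain has size at most w then there is a realizer of size w. -/
theorem stmt_3 (α : Type*) [Fintype α] [PartialOrder α] (w : ℕ)
    (hw : ∀ s : Finset α, IsAntichain (· ≤ ·) (s : Set α) → s.card ≤ w) :
    ∃ L : Fin w → α → α → Prop,
      (∀ i, IsLinearOrder α (L i)) ∧
      ∀ x y : α, x ≤ y ↔ ∀ i, L i x y := by
  obtain ⟨c, hc⟩ := exists_chainCover_of_forall_antichain_card_le (univ : Finset α) w
    fun t _ => hw t
  choose L hL hLle hLc using fun i => (hc.isChain i).exists_linearExtension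
  refine ⟨L, hL, fun x y => ⟨fun hxy i => hLle i x y hxy, fun h => ?_⟩⟩
  by_contra hxy
  obtain ⟨i, hyi⟩ := hc.cover y (mem_univ y)
  exact hLc i y hyi x hxy (h i)
end

section
/- Let G be an acyclic digraph, C a channel, and u, v vertices with u ∉ C, v ∉ C. If u reaches v, then Proj_C(u) equals Proj_C(v) or Proj_C(u) precedes Proj_C(v) in C; in particular the position of Proj_C(u) in C is at most the position of Proj_C(v). -/
def reaches {V : Type*} (E : V → V → Prop) : V → V → Prop :=
  Relation.ReflTransGen E

theorem stmt_7_general {V : Type*} [DecidableEq V] (E : V → V → Prop)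
    (C : List V)
    (u v : V) (huv : reaches E u v)
    (pu pv : V) (hpu : pu ∈ C) (hpv : pv ∈ C)
    (hpumin : ∀ w ∈ C, reaches E u w → C.idxOf pu ≤ C.idxOf w)
    (hpvr : reaches E v pv) :
    (pu = pv ∨ C.idxOf pu < C.idxOf pv) ∧ C.idxOf pu ≤ C.idxOf pv := by
  have hle : C.idxOf pu ≤ C.idxOf pv := hpumin pv hpv (huv.trans hpvr)
  exact ⟨hle.lt_or_eq.symm.imp_left (List.idxOf_inj hpu).mp, hle⟩

/-- If u, v do not lie on the channel C and u reaches v, then Proj_C(u) equals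
Proj_C(v) or precedes it in C; in particular its position is at most that of
Proj_C(v). -/
theorem stmt_7 {V : Type*} [DecidableEq V] (E : V → V → Prop)
    (C : List V) (hC : C.Pairwise (reaches E)) (hnd : C.Nodup)
    (u v : V) (hu : u ∉ C) (hv : v ∉ C) (huv : reaches E u v)
    (pu pv : V) (hpu : pu ∈ C) (hpv : pv ∈ C)
    (hpur : reaches E u pu)
    (hpumin : ∀ w ∈ C, reaches E u w → C.idxOf pu ≤ C.idxOf w)
    (hpvr : reaches E v pv)
    (hpvmin : ∀ w ∈ C, reaches E v w → C.idxOf pv ≤ C.idxOf w) :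
    (pu = pv ∨ C.idxOf pu < C.idxOf pv) ∧ C.idxOf pu ≤ C.idxOf pv :=
  stmt_7_general E C u v huv pu pv hpu hpv hpumin hpvr
end

section
/- Let G be a finite acyclic digraph whose vertex set is partitioned into two channels C1 and C2. Define coordinates: for v ∈ C1, X(v) = position of v in C1 and Y(v) = position of Proj_{C2}(v) in C2; for v ∈ C2, Y(v) = position of v in C2 and X(v) = position of Proj_{C1}(v) in C1. Then any two distinct vertices receive distinct coordinate pairs. -/
section

variable {V : Type*} [DecidableEq V]

lemma eq_of_coord_eq {C : List V} {X : V → ℕ} (hX : ∀ v ∈ C, X v = C.idxOf v)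
    {u v : V} (hu : u ∈ C) (hv : v ∈ C) (h : X u = X v) : u = v :=
  (List.idxOf_inj hu).1 (by rw [← hX u hu, h, hX v hv])

lemma rel_of_coord_eq {R : V → V → Prop} {C D : List V} {X : V → ℕ}
    (hXC : ∀ v ∈ C, X v = C.idxOf v) (hXD : ∀ v ∈ D, ∃ p ∈ C, X v = C.idxOf p ∧ R v p)
    {u v : V} (hu : u ∈ C) (hv : v ∈ D) (h : X u = X v) : R v u := by
  obtain ⟨p, hp, hXp, hvp⟩ := hXD v hv
  rwa [eq_of_coord_eq hXC hu hp (h.trans (hXp.trans (hXC p hp).symm))]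

end

theorem stmt_8_general {V : Type*} [DecidableEq V] (E : V → V → Prop)
    (hacyc : ∀ u v : V, reaches E u v → reaches E v u → u = v)
    (C1 C2 : List V)
    (hcover : ∀ v : V, v ∈ C1 ∨ v ∈ C2)
    (X Y : V → ℕ)
    (hX1 : ∀ v ∈ C1, X v = C1.idxOf v)
    (hY2 : ∀ v ∈ C2, Y v = C2.idxOf v)
    (hY1 : ∀ v ∈ C1, ∃ p ∈ C2, Y v = C2.idxOf p ∧ reaches E v p ∧
        ∀ w ∈ C2, reaches E v w → C2.idxOf p ≤ C2.idxOf w)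
    (hX2 : ∀ v ∈ C2, ∃ p ∈ C1, X v = C1.idxOf p ∧ reaches E v p ∧
        ∀ w ∈ C1, reaches E v w → C1.idxOf p ≤ C1.idxOf w) :
    ∀ u v : V, u ≠ v → X u ≠ X v ∨ Y u ≠ Y v := by
  have hY1' : ∀ v ∈ C1, ∃ p ∈ C2, Y v = C2.idxOf p ∧ reaches E v p := fun v hv =>
    let ⟨p, hp, hYp, hvp, _⟩ := hY1 v hv; ⟨p, hp, hYp, hvp⟩
  have hX2' : ∀ v ∈ C2, ∃ p ∈ C1, X v = C1.idxOf p ∧ reaches E v p := fun v hv =>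
    let ⟨p, hp, hXp, hvp, _⟩ := hX2 v hv; ⟨p, hp, hXp, hvp⟩
  have mixed : ∀ u ∈ C1, ∀ v ∈ C2, X u = X v → Y u = Y v → u = v := fun u hu v hv hx hy =>
    hacyc u v (rel_of_coord_eq hY2 hY1' hv hu hy.symm) (rel_of_coord_eq hX1 hX2' hu hv hx)
  intro u v huv
  by_contra! ⟨hx, hy⟩
  apply huv
  rcases hcover u with hu | hu <;> rcases hcover v with hv | hv
  · exact eq_of_coord_eq hX1 hu hv hx
  · exact mixed u hu v hv hx hy
  · exact (mixed v hv u hu hx.symm hy.symm).symm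
  · exact eq_of_coord_eq hY2 hu hv hy

/-- In the 2-channel dominance drawing (Algorithm 2D-Draw), any two distinct
vertices receive distinct coordinate pairs. -/
theorem stmt_8 {V : Type*} [Fintype V] [DecidableEq V] (E : V → V → Prop)
    (hacyc : ∀ u v : V, reaches E u v → reaches E v u → u = v)
    (s t : V) (hs : ∀ v, reaches E s v) (ht : ∀ v, reaches E v t)
    (C1 C2 : List V)
    (hC1 : C1.Pairwise (reaches E)) (hC2 : C2.Pairwise (reaches E))
    (hnd1 : C1.Nodup) (hnd2 : C2.Nodup)
    (hsC : s ∈ C1 ∧ s ∈ C2) (htC : t ∈ C1 ∧ t ∈ C2)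
    (hcover : ∀ v : V, v ∈ C1 ∨ v ∈ C2)
    (honly : ∀ v : V, v ≠ s → v ≠ t → ¬(v ∈ C1 ∧ v ∈ C2))
    (X Y : V → ℕ)
    (hX1 : ∀ v ∈ C1, X v = C1.idxOf v)
    (hY2 : ∀ v ∈ C2, Y v = C2.idxOf v)
    (hY1 : ∀ v ∈ C1, ∃ p ∈ C2, Y v = C2.idxOf p ∧ reaches E v p ∧
        ∀ w ∈ C2, reaches E v w → C2.idxOf p ≤ C2.idxOf w)
    (hX2 : ∀ v ∈ C2, ∃ p ∈ C1, X v = C1.idxOf p ∧ reaches E v p ∧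
        ∀ w ∈ C1, reaches E v w → C1.idxOf p ≤ C1.idxOf w) :
    ∀ u v : V, u ≠ v → X u ≠ X v ∨ Y u ≠ Y v :=
  stmt_8_general E hacyc C1 C2 hcover X Y hX1 hY2 hY1 hX2
end

section
/- Let G be a finite acyclic digraph whose vertices are partitioned into two channels C1, C2 (sharing the source and sink). With coordinates X, Y assigned as follows — for v ∈ C1: X(v) = position of v in C1, Y(v) = position of Proj_{C2}(v); for v ∈ C2: Y(v) = position of v in C2, X(v) = position of Proj_{C1}(v) — the resulting placement is a dominance drawing: for all distinct u, v, u reaches v if and only if X(u) ≤ X(v) and Y(u) ≤ Y(v). -/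
namespace List

variable {α : Type*} [DecidableEq α] {R : α → α → Prop} {l : List α} {a b : α}

theorem Pairwise.rel_of_idxOf_lt (hl : l.Pairwise R) (ha : a ∈ l) (hb : b ∈ l)
    (h : l.idxOf a < l.idxOf b) : R a b := by
  simpa [getElem_idxOf] using pairwise_iff_getElem.1 hl _ _
    (idxOf_lt_length_iff.2 ha) (idxOf_lt_length_iff.2 hb) h

theorem Pairwise.rel_of_idxOf_le (hl : l.Pairwise R) (hrefl : ∀ a, R a a) (ha : a ∈ l)
    (hb : b ∈ l) (h : l.idxOf a ≤ l.idxOf b) : R a b := by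
  rcases h.eq_or_lt with heq | hlt
  · rw [(idxOf_inj ha).1 heq]
    exact hrefl b
  · exact hl.rel_of_idxOf_lt ha hb hlt

theorem Pairwise.idxOf_le_of_rel (hl : l.Pairwise R) (hanti : ∀ a b, R a b → R b a → a = b)
    (ha : a ∈ l) (hb : b ∈ l) (h : R a b) : l.idxOf a ≤ l.idxOf b := by
  by_contra! hlt
  obtain rfl := hanti a b h (hl.rel_of_idxOf_lt hb ha hlt)
  exact hlt.false

end List

section Projection

variable {V : Type*} [DecidableEq V] {E : V → V → Prop} {C : List V} {u v : V} {m n : ℕ}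

/-- `n` is the position of `Proj_C(v)` in `C`. -/
def IsProjIndex (E : V → V → Prop) (C : List V) (v : V) (n : ℕ) : Prop :=
  ∃ p ∈ C, n = C.idxOf p ∧ reaches E v p ∧ ∀ w ∈ C, reaches E v w → C.idxOf p ≤ C.idxOf w

theorem isProjIndex_idxOf_of_mem (hacyc : ∀ u v : V, reaches E u v → reaches E v u → u = v)
    (hC : C.Pairwise (reaches E)) (hv : v ∈ C) : IsProjIndex E C v (C.idxOf v) :=
  ⟨v, hv, rfl, .refl, fun _ hw hvw => hC.idxOf_le_of_rel hacyc hv hw hvw⟩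

theorem IsProjIndex.le_of_reaches (hu : IsProjIndex E C u m) (hv : IsProjIndex E C v n)
    (huv : reaches E u v) : m ≤ n := by
  obtain ⟨p, -, rfl, -, hmin⟩ := hu
  obtain ⟨q, hq, rfl, hvq, -⟩ := hv
  exact hmin q hq (huv.trans hvq)

theorem IsProjIndex.reaches_of_le (hC : C.Pairwise (reaches E)) (hu : IsProjIndex E C u m)
    (hv : v ∈ C) (h : m ≤ C.idxOf v) : reaches E u v := by
  obtain ⟨p, hp, rfl, hup, -⟩ := hu
  exact hup.trans (hC.rel_of_idxOf_le (fun _ => .refl) hp hv h)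

end Projection

theorem stmt_9_general {V : Type*} [DecidableEq V] (E : V → V → Prop)
    (hacyc : ∀ u v : V, reaches E u v → reaches E v u → u = v)
    (C1 C2 : List V)
    (hC1 : C1.Pairwise (reaches E)) (hC2 : C2.Pairwise (reaches E))
    (hcover : ∀ v : V, v ∈ C1 ∨ v ∈ C2)
    (X Y : V → ℕ)
    (hX1 : ∀ v ∈ C1, X v = C1.idxOf v)
    (hY2 : ∀ v ∈ C2, Y v = C2.idxOf v)
    (hY1 : ∀ v ∈ C1, ∃ p ∈ C2, Y v = C2.idxOf p ∧ reaches E v p ∧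
        ∀ w ∈ C2, reaches E v w → C2.idxOf p ≤ C2.idxOf w)
    (hX2 : ∀ v ∈ C2, ∃ p ∈ C1, X v = C1.idxOf p ∧ reaches E v p ∧
        ∀ w ∈ C1, reaches E v w → C1.idxOf p ≤ C1.idxOf w) :
    ∀ u v : V, u ≠ v → (reaches E u v ↔ X u ≤ X v ∧ Y u ≤ Y v) := by
  have hX : ∀ w, IsProjIndex E C1 w (X w) := fun w => (hcover w).elim
    (fun hw => hX1 w hw ▸ isProjIndex_idxOf_of_mem hacyc hC1 hw) (hX2 w)
  have hY : ∀ w, IsProjIndex E C2 w (Y w) := fun w => (hcover w).elim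
    (hY1 w) (fun hw => hY2 w hw ▸ isProjIndex_idxOf_of_mem hacyc hC2 hw)
  intro u v _
  constructor
  · intro huv
    exact ⟨(hX u).le_of_reaches (hX v) huv, (hY u).le_of_reaches (hY v) huv⟩
  · rintro ⟨hXuv, hYuv⟩
    rcases hcover v with hv | hv
    · exact (hX u).reaches_of_le hC1 hv (hX1 v hv ▸ hXuv)
    · exact (hY u).reaches_of_le hC2 hv (hY2 v hv ▸ hYuv)

/-- The 2-channel drawing of Algorithm 2D-Draw is a dominance drawing: for all
distinct u, v, u reaches v iff X(u) ≤ X(v) and Y(u) ≤ Y(v). -/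
theorem stmt_9 {V : Type*} [Fintype V] [DecidableEq V] (E : V → V → Prop)
    (hacyc : ∀ u v : V, reaches E u v → reaches E v u → u = v)
    (s t : V) (hs : ∀ v, reaches E s v) (ht : ∀ v, reaches E v t)
    (C1 C2 : List V)
    (hC1 : C1.Pairwise (reaches E)) (hC2 : C2.Pairwise (reaches E))
    (hnd1 : C1.Nodup) (hnd2 : C2.Nodup)
    (hsC : s ∈ C1 ∧ s ∈ C2) (htC : t ∈ C1 ∧ t ∈ C2)
    (hcover : ∀ v : V, v ∈ C1 ∨ v ∈ C2)
    (honly : ∀ v : V, v ≠ s → v ≠ t → ¬(v ∈ C1 ∧ v ∈ C2))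
    (X Y : V → ℕ)
    (hX1 : ∀ v ∈ C1, X v = C1.idxOf v)
    (hY2 : ∀ v ∈ C2, Y v = C2.idxOf v)
    (hY1 : ∀ v ∈ C1, ∃ p ∈ C2, Y v = C2.idxOf p ∧ reaches E v p ∧
        ∀ w ∈ C2, reaches E v w → C2.idxOf p ≤ C2.idxOf w)
    (hX2 : ∀ v ∈ C2, ∃ p ∈ C1, X v = C1.idxOf p ∧ reaches E v p ∧
        ∀ w ∈ C1, reaches E v w → C1.idxOf p ≤ C1.idxOf w) :
    ∀ u v : V, u ≠ v → (reaches E u v ↔ X u ≤ X v ∧ Y u ≤ Y v) :=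
  stmt_9_general E hacyc C1 C2 hC1 hC2 hcover X Y hX1 hY2 hY1 hX2
end

section
/- The dominance drawing dimension of any finite st-DAG G with n vertices is at most min(n/2, w_G), where w_G is the width of G (maximum number of pairwise incomparable vertices). -/
open Finset
open scoped Classical

namespace DominanceDrawing

variable {V : Type*} [PartialOrder V]

theorem nonempty_orderEmbedding_of_separating {ι : Type*} (F : ι → V → ℤ)
    (hF : ∀ i, Monotone (F i)) (hsep : ∀ u v, ¬ u ≤ v → ∃ i, F i v < F i u) :
    Nonempty (V ↪o (ι → ℤ)) :=
  ⟨OrderEmbedding.ofMapLEIff (fun v i => F i v) fun u v =>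
    ⟨fun h => by_contra fun huv => let ⟨i, hi⟩ := hsep u v huv; (h i).not_gt hi,
      fun h i => hF i h⟩⟩

theorem exists_linearExtension_enum (R : Finset V) {n : ℕ} (hR : #R = n) :
    ∃ x : Fin n → V, (∀ r ∈ R, ∃ j, x j = r) ∧ ∀ i j, i < j → ¬ x j ≤ x i := by
  let e : LinearExtension V ≃ V := Equiv.refl _
  let f := (R.map e.symm.toEmbedding).orderEmbOfFin (by rw [card_map, hR])
  refine ⟨fun j => e (f j), fun r hr => ?_, fun i j hij hji => ?_⟩
  · obtain ⟨j, hj⟩ : e.symm r ∈ Set.range f := by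
      rw [range_orderEmbOfFin]; exact mem_map_of_mem _ hr
    exact ⟨j, by simp [hj]⟩
  · exact (f.strictMono hij).not_ge ((toLinearExtension (α := V)).monotone hji)

theorem exists_monotone_injective [Fintype V] :
    ∃ g : V → ℤ, Monotone g ∧ Function.Injective g ∧ ∀ z, 0 ≤ g z ∧ g z < Fintype.card V := by
  obtain ⟨x, hsurj, hx⟩ := exists_linearExtension_enum (univ : Finset V) card_univ
  choose j hj using fun z => hsurj z (mem_univ z)
  refine ⟨fun z => j z, fun z z' h => ?_, fun z z' h => ?_, fun z => ⟨by positivity, by simp⟩⟩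
  · by_contra hlt
    exact hx _ _ (by simpa using hlt) (by rwa [hj, hj])
  · rw [← hj z, ← hj z', Fin.val_injective (Int.ofNat_inj.mp h)]

theorem exists_monotone_eqOn_of_isAntichain {A : Finset V} (hA : IsAntichain (· ≤ ·) (A : Set V))
    (φ : V → ℤ) : ∃ g : V → ℤ, Monotone g ∧ ∀ a ∈ A, g a = φ a := by
  obtain ⟨L, hL⟩ := (A.image φ).bddBelow
  have hLφ : ∀ a ∈ A, L ≤ φ a := fun a ha => hL (mem_coe.mpr (mem_image_of_mem φ ha))
  refine ⟨fun z => {a ∈ A | a ≤ z}.fold max L φ, fun z z' h => ?_, fun a ha => ?_⟩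
  · refine (fold_max_le _).mpr ⟨(le_fold_max _).mpr (Or.inl le_rfl), fun a ha => ?_⟩
    rw [mem_filter] at ha
    exact (le_fold_max _).mpr (Or.inr ⟨a, mem_filter.mpr ⟨ha.1, ha.2.trans h⟩, le_rfl⟩)
  · have : {b ∈ A | b ≤ a} = {a} := by
      ext b
      simp only [mem_filter, mem_singleton]
      exact ⟨fun ⟨hb, hba⟩ => hA.eq hb ha hba, by rintro rfl; exact ⟨ha, le_rfl⟩⟩
    simp only [this, fold_singleton, max_eq_left (hLφ a ha)]

noncomputable def upDown (x y z : V) : ℤ := (if x ≤ z then 2 else 0) - if z ≤ y then 1 else 0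

theorem upDown_monotone (x y : V) : Monotone (upDown x y) := by
  intro z z' h
  unfold upDown
  have h1 : x ≤ z → x ≤ z' := fun hx => hx.trans h
  have h2 : z' ≤ y → z ≤ y := h.trans
  split_ifs <;> simp_all

theorem upDown_lt_left {x v : V} (y : V) (h : ¬ x ≤ v) : upDown x y v < upDown x y x := by
  unfold upDown
  split_ifs <;> simp_all

theorem upDown_lt_right {x y u : V} (hxy : ¬ x ≤ y) (h : ¬ u ≤ y) : upDown x y y < upDown x y u := by
  unfold upDown
  split_ifs <;> simp_all

theorem mul_add_lt_mul_add {M a b c d : ℤ} (hab : a < b) (hc : c < M) (hd : 0 ≤ d)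
    (hM : 0 ≤ M) : M * a + c < M * b + d := by
  nlinarith [mul_le_mul_of_nonneg_left (Int.add_one_le_of_lt hab) hM]

theorem injective_mul_add {α : Type*} {M : ℤ} {f g : α → ℤ} (hg : ∀ z, 0 ≤ g z ∧ g z < M)
    (hg_inj : Function.Injective g) : Function.Injective fun z => M * f z + g z := by
  intro u v h
  have hM : 0 ≤ M := (hg u).1.trans (hg u).2.le
  refine hg_inj ?_
  rcases lt_trichotomy (f u) (f v) with h' | h' | h'
  · exact absurd h (mul_add_lt_mul_add h' (hg u).2 (hg v).1 hM).ne
  · simpa [h'] using h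
  · exact absurd h (mul_add_lt_mul_add h' (hg v).2 (hg u).1 hM).ne'

def IsChainColoring (S : Finset V) (w : ℕ) (c : V → ℕ) : Prop :=
  (∀ x ∈ S, c x < w) ∧ ∀ x ∈ S, ∀ y ∈ S, c x = c y → x ≤ y ∨ y ≤ x

theorem IsChainColoring.of_sdiff_isChain {S K : Finset V} {w : ℕ} {c : V → ℕ}
    (hc : IsChainColoring (S \ K) w c) (hK : IsChain (· ≤ ·) (K : Set V)) :
    IsChainColoring S (w + 1) fun x => if x ∈ K then w else c x := by
  refine ⟨fun x hx => ?_, fun x hx y hy hxy => ?_⟩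
  · dsimp only
    split_ifs with hxK
    · exact Nat.lt_succ_self w
    · exact (hc.1 x (mem_sdiff.mpr ⟨hx, hxK⟩)).trans (Nat.lt_succ_self w)
  · by_cases hxK : x ∈ K <;> by_cases hyK : y ∈ K <;> simp only [hxK, hyK, if_true, if_false] at hxy
    · exact hK.total hxK hyK
    · exact absurd hxy (hc.1 y (mem_sdiff.mpr ⟨hy, hyK⟩)).ne'
    · exact absurd hxy (hc.1 x (mem_sdiff.mpr ⟨hx, hxK⟩)).ne
    · exact hc.2 x (mem_sdiff.mpr ⟨hx, hxK⟩) y (mem_sdiff.mpr ⟨hy, hyK⟩) hxy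

theorem IsChainColoring.exists_mem_color_eq {S T : Finset V} {w : ℕ} {c : V → ℕ}
    (hc : IsChainColoring S w c) (hTS : T ⊆ S) (hT : IsAntichain (· ≤ ·) (T : Set V))
    (hTw : #T = w) {i : ℕ} (hi : i < w) : ∃ y ∈ T, c y = i := by
  have hinj : Set.InjOn c T := fun x hx y hy hxy =>
    (hc.2 x (hTS hx) y (hTS hy) hxy).elim (hT.eq hx hy) fun h => (hT.eq hy hx h).symm
  have himage : T.image c = range w :=
    eq_of_subset_of_card_le (fun j hj => by
        obtain ⟨y, hy, rfl⟩ := mem_image.mp hj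
        exact mem_range.mpr (hc.1 y (hTS hy)))
      (by rw [card_range, card_image_of_injOn hinj, hTw])
  exact mem_image.mp (himage ▸ mem_range.mpr hi : i ∈ T.image c)

/-- `x i` is the largest element of colour `i` lying in some antichain of maximum size. -/
theorem IsChainColoring.exists_tops {S : Finset V} {n : ℕ} {c : V → ℕ}
    (hc : IsChainColoring S n c) (hS : ∃ T ⊆ S, IsAntichain (· ≤ ·) (T : Set V) ∧ #T = n) :
    ∃ x : Fin n → V, (∀ i, x i ∈ S) ∧ Function.Injective x ∧
      IsAntichain (· ≤ ·) (Set.range x) ∧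
      ∀ i : Fin n, ∀ T ⊆ S, IsAntichain (· ≤ ·) (T : Set V) → #T = n →
        ∀ y ∈ T, c y = i → y ≤ x i := by
  let IsMax (T : Finset V) : Prop := T ⊆ S ∧ IsAntichain (· ≤ ·) (T : Set V) ∧ #T = n
  have htop : ∀ i : Fin n, ∃ x ∈ S, c x = i ∧ (∃ T, IsMax T ∧ x ∈ T) ∧
      ∀ T, IsMax T → ∀ y ∈ T, c y = i → y ≤ x := by
    intro i
    obtain ⟨T₀, hT₀S, hT₀, hT₀n⟩ := hS
    obtain ⟨y₀, hy₀, hy₀i⟩ := hc.exists_mem_color_eq hT₀S hT₀ hT₀n i.isLt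
    obtain ⟨x, hx, hxmax⟩ := exists_maximal (s := {y ∈ S | c y = i ∧ ∃ T, IsMax T ∧ y ∈ T})
      ⟨y₀, mem_filter.mpr ⟨hT₀S hy₀, hy₀i, T₀, ⟨hT₀S, hT₀, hT₀n⟩, hy₀⟩⟩
    obtain ⟨hxS, hxi, hxT⟩ := mem_filter.mp hx
    refine ⟨x, hxS, hxi, hxT, fun T hT y hy hyi => ?_⟩
    have hyS := hT.1 hy
    exact (hc.2 y hyS x hxS (hyi.trans hxi.symm)).elim id
      (hxmax (mem_filter.mpr ⟨hyS, hyi, T, hT, hy⟩))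
  choose x hxS hxc hxT hxtop using htop
  have hle : ∀ i j, x i ≤ x j → i = j := fun i j hij => by
    obtain ⟨T, hT, hxjT⟩ := hxT j
    obtain ⟨y, hyT, hyi⟩ := hc.exists_mem_color_eq hT.1 hT.2.1 hT.2.2 i.isLt
    have : y = x j := hT.2.1.eq hyT hxjT ((hxtop i T hT y hyT hyi).trans hij)
    exact Fin.ext (by rw [← hyi, this, hxc j])
  refine ⟨x, hxS, fun i j h => hle i j h.le, ?_, fun i T hTS hT hTn => hxtop i T ⟨hTS, hT, hTn⟩⟩
  rintro _ ⟨i, rfl⟩ _ ⟨j, rfl⟩ hne hij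
  exact hne (congrArg x (hle i j hij))

/-- The induction step of Galvin's proof of Dilworth's theorem. -/
theorem exists_isChain_forall_antichain_card_le {S : Finset V} {m : V} (hm : m ∈ S)
    (hmax : ∀ x ∈ S, m ≤ x → x = m) {w : ℕ}
    (hS : ∀ T ⊆ S, IsAntichain (· ≤ ·) (T : Set V) → #T ≤ w + 1) {c : V → ℕ}
    (hc : IsChainColoring (S.erase m) (w + 1) c) :
    ∃ K ⊆ S, m ∈ K ∧ IsChain (· ≤ ·) (K : Set V) ∧
      ∀ T ⊆ S \ K, IsAntichain (· ≤ ·) (T : Set V) → #T ≤ w := by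
  by_cases hex : ∃ T ⊆ S.erase m, IsAntichain (· ≤ ·) (T : Set V) ∧ #T = w + 1
  swap
  · refine ⟨{m}, singleton_subset_iff.mpr hm, mem_singleton_self m,
      by simp [Set.subsingleton_singleton.isChain], fun T hT hTa => ?_⟩
    rw [sdiff_singleton_eq_erase] at hT
    have := hS T (hT.trans (erase_subset m S)) hTa
    have : #T ≠ w + 1 := fun h => hex ⟨T, hT, hTa, h⟩
    omega
  obtain ⟨x, hxS, hx_inj, hx_anti, hxtop⟩ := hc.exists_tops hex
  have hxm : ∀ i, x i ≠ m := fun i h => notMem_erase m S (h ▸ hxS i)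
  obtain ⟨i, hxim⟩ : ∃ i, x i ≤ m := by
    by_contra! hno
    have hmX : m ∉ univ.image x := by simpa using fun i => hxm i
    have := hS (insert m (univ.image x))
      (insert_subset hm fun y hy => by
        obtain ⟨j, -, rfl⟩ := mem_image.mp hy
        exact mem_of_mem_erase (hxS j))
      (by
        rw [coe_insert, coe_image, coe_univ, Set.image_univ]
        refine hx_anti.insert (fun y hy _ => ?_) fun y hy hne hmy => ?_ <;>
          obtain ⟨j, rfl⟩ := hy
        · exact hno j
        · exact hne (hmax _ (mem_of_mem_erase (hxS j)) hmy).symm)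
    rw [card_insert_of_notMem hmX, card_image_of_injective _ hx_inj, card_univ,
      Fintype.card_fin] at this
    omega
  refine ⟨insert m {y ∈ S.erase m | c y = i ∧ y ≤ x i},
    insert_subset hm fun y hy => mem_of_mem_erase (mem_filter.mp hy).1, mem_insert_self _ _, ?_,
    fun T hT hTa => ?_⟩
  · rw [coe_insert]
    refine IsChain.insert (fun y hy z hz _ => ?_) fun y hy _ => Or.inr ?_
    · obtain ⟨hyS, hyi, -⟩ := mem_filter.mp (mem_coe.mp hy)
      obtain ⟨hzS, hzi, -⟩ := mem_filter.mp (mem_coe.mp hz)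
      exact hc.2 y hyS z hzS (hyi.trans hzi.symm)
    · exact (mem_filter.mp (mem_coe.mp hy)).2.2.trans hxim
  · have hTS : T ⊆ S.erase m := fun y hy => by
      obtain ⟨hyS, hyK⟩ := mem_sdiff.mp (hT hy)
      exact mem_erase.mpr ⟨fun h => hyK (h ▸ mem_insert_self _ _), hyS⟩
    refine Nat.le_of_lt_succ (lt_of_le_of_ne (hS T (hTS.trans (erase_subset _ _)) hTa) fun h => ?_)
    obtain ⟨y, hyT, hyi⟩ := hc.exists_mem_color_eq hTS hTa h i.isLt
    exact (mem_sdiff.mp (hT hyT)).2 (mem_insert_of_mem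
      (mem_filter.mpr ⟨hTS hyT, hyi, hxtop i T hTS hTa h y hyT hyi⟩))

/-- Dilworth's theorem, by Galvin's induction. -/
theorem exists_isChainColoring (S : Finset V) (w : ℕ)
    (hS : ∀ T ⊆ S, IsAntichain (· ≤ ·) (T : Set V) → #T ≤ w) : ∃ c, IsChainColoring S w c := by
  induction S using Finset.strongInduction generalizing w with
  | H S ih =>
  rcases S.eq_empty_or_nonempty with rfl | hne
  · exact ⟨0, by simp [IsChainColoring]⟩
  obtain ⟨m, hmS, hmax⟩ := exists_maximal hne
  obtain _ | w := w
  · simpa using hS {m} (singleton_subset_iff.mpr hmS) (by simp [IsAntichain.singleton])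
  obtain ⟨c, hc⟩ := ih (S.erase m) (erase_ssubset hmS) (w + 1) fun T hT =>
    hS T (hT.trans (erase_subset m S))
  obtain ⟨K, hKS, hmK, hK, hSK⟩ :=
    exists_isChain_forall_antichain_card_le hmS (fun x hx h => le_antisymm (hmax hx h) h) hS hc
  obtain ⟨c', hc'⟩ := ih (S \ K) (sdiff_ssubset hKS ⟨m, hmK⟩) w hSK
  exact ⟨_, hc'.of_sdiff_isChain hK⟩

theorem nonempty_orderEmbedding_of_isChainColoring [Fintype V] {w : ℕ} {c : V → ℕ}
    (hc : IsChainColoring univ w c) : Nonempty (V ↪o (Fin w → ℤ)) := by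
  refine nonempty_orderEmbedding_of_separating (fun i z => #{x | c x = i ∧ x ≤ z})
    (fun i z z' h => Nat.cast_le.mpr (card_le_card fun x hx => ?_)) fun u v huv => ?_
  · rw [mem_filter] at hx ⊢
    exact ⟨hx.1, hx.2.1, hx.2.2.trans h⟩
  · refine ⟨⟨c u, hc.1 u (mem_univ u)⟩, Nat.cast_lt.mpr (card_lt_card ⟨fun x hx => ?_, fun h => ?_⟩)⟩
    · rw [mem_filter] at hx ⊢
      refine ⟨hx.1, hx.2.1, ?_⟩
      exact (hc.2 x (mem_univ x) u (mem_univ u) hx.2.1).resolve_right fun hux => huv (hux.trans hx.2.2)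
    · exact huv (mem_filter.mp (h (mem_filter.mpr ⟨mem_univ u, rfl, le_rfl⟩))).2.2

theorem notMem_of_isAntichain {A : Finset V} (hA : IsAntichain (· ≤ ·) (A : Set V)) (hA2 : 2 ≤ #A)
    {s : V} (hs : ∀ v, s ≤ v ∨ v ≤ s) : s ∉ A := fun hsA => by
  obtain ⟨a, ha, has⟩ := exists_mem_ne hA2 s
  exact (hs a).elim (hA hsA ha has.symm) (hA ha hsA has)

theorem nonempty_orderEmbedding_card_compl [Fintype V] {s t : V} (hs : IsBot s) (ht : IsTop t)
    {A : Finset V} (hA : IsAntichain (· ≤ ·) (A : Set V)) (hA2 : 2 ≤ #A) :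
    Nonempty (V ↪o (Fin #Aᶜ → ℤ)) := by
  have hsA : s ∉ A := notMem_of_isAntichain hA hA2 fun v => Or.inl (hs v)
  have htA : t ∉ A := notMem_of_isAntichain hA hA2 fun v => Or.inr (ht v)
  have hst : s ≠ t := fun hst => by
    obtain ⟨a, ha, b, hb, hab⟩ := one_lt_card.mp hA2
    exact hA ha hb hab ((ht a).trans (hst ▸ hs b))
  obtain ⟨k, hk⟩ : ∃ k, #Aᶜ = k + 2 := Nat.exists_eq_add_of_le' <| by
    simpa [card_pair hst] using
      card_le_card (show {s, t} ⊆ Aᶜ by simp [insert_subset_iff, hsA, htA])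
  rw [hk]
  obtain ⟨x, hx_surj, hx⟩ := exists_linearExtension_enum Aᶜ hk
  have hx0 : x 0 = s := by
    obtain ⟨j, rfl⟩ := hx_surj s (mem_compl.mpr hsA)
    by_contra h
    exact hx 0 j (Fin.pos_iff_ne_zero.mpr fun hj => h (hj ▸ rfl)) (hs _)
  have hxlast : x (Fin.last _) = t := by
    obtain ⟨j, rfl⟩ := hx_surj t (mem_compl.mpr htA)
    by_contra h
    exact hx j (Fin.last _) (lt_of_le_of_ne (Fin.le_last j) fun hj => h (hj ▸ rfl)) (ht _)
  obtain ⟨g, hg_mono, hg_inj, hg⟩ := exists_monotone_injective (V := V)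
  -- `0 ≤ g < M`, so `F i` compares by `upDown` first and by `g` only on ties.
  set M : ℤ := (Fintype.card V : ℤ)
  let F : Fin (k + 1) → V → ℤ := fun i z => M * upDown (x i.succ) (x i.castSucc) z + g z
  have hF_lt {i : Fin (k + 1)} {u v : V} (h : upDown (x i.succ) (x i.castSucc) v <
      upDown (x i.succ) (x i.castSucc) u) : F i v < F i u :=
    mul_add_lt_mul_add h (hg v).2 (hg u).1 (by positivity)
  obtain ⟨G, hG_mono, hG⟩ := exists_monotone_eqOn_of_isAntichain hA fun z => -F 0 z
  refine nonempty_orderEmbedding_of_separating (Fin.cases G F) (Fin.cases hG_mono fun i =>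
    ((upDown_monotone _ _).const_mul (by positivity)).add hg_mono) fun u v huv => ?_
  by_cases huA : u ∈ A
  · by_cases hvA : v ∈ A
    · rcases (injective_mul_add hg hg_inj).ne (ne_of_not_le huv) |>.lt_or_gt with h | h
      · exact ⟨0, by simpa [hG u huA, hG v hvA] using h⟩
      · exact ⟨(0 : Fin (k + 1)).succ, h⟩
    · obtain ⟨j, rfl⟩ := hx_surj v (mem_compl.mpr hvA)
      obtain ⟨i, rfl⟩ := (Fin.exists_castSucc_eq (i := j)).mpr fun h =>
        huv (by rw [h, hxlast]; exact ht u)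
      exact ⟨i.succ, hF_lt (upDown_lt_right (hx _ _ i.castSucc_lt_succ) huv)⟩
  · obtain ⟨j, rfl⟩ := hx_surj u (mem_compl.mpr huA)
    obtain ⟨i, rfl⟩ := (Fin.exists_succ_eq (x := j)).mpr fun h =>
      huv (by rw [h, hx0]; exact hs v)
    exact ⟨i.succ, hF_lt (upDown_lt_left _ huv)⟩

theorem exists_orderEmbedding_fin_le_min [Fintype V] {s t : V} (hs : IsBot s) (ht : IsTop t)
    {w : ℕ} (hw : ∀ A : Finset V, IsAntichain (· ≤ ·) (A : Set V) → #A ≤ w) :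
    ∃ d ≤ min (Fintype.card V / 2) w, Nonempty (V ↪o (Fin d → ℤ)) := by
  obtain ⟨A, hA, hAmax⟩ := exists_max_image {A : Finset V | IsAntichain (· ≤ ·) (A : Set V)} card
    ⟨∅, by simp⟩
  simp only [mem_filter, mem_univ, true_and] at hA hAmax
  rcases le_or_gt #A (Fintype.card V / 2) with hAn | hAn
  · obtain ⟨c, hc⟩ := exists_isChainColoring univ #A fun T _ hT => hAmax T hT
    exact ⟨#A, le_min hAn (hw A hA), nonempty_orderEmbedding_of_isChainColoring hc⟩
  rcases le_or_gt (Fintype.card V) 1 with hn | hn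
  · have : Subsingleton V := Fintype.card_le_one_iff_subsingleton.mp hn
    exact ⟨0, Nat.zero_le _, nonempty_orderEmbedding_of_separating (Fin.elim0 : Fin 0 → V → ℤ)
      (fun i => i.elim0) fun u v huv => absurd (Subsingleton.elim u v).le huv⟩
  refine ⟨#Aᶜ, ?_, nonempty_orderEmbedding_card_compl hs ht hA (by omega)⟩
  have := hw A hA
  rw [card_compl]
  omega

end DominanceDrawing

/-- The dominance drawing dimension of a finite st-DAG with n vertices is at
most min(⌊n/2⌋, w), where w bounds the size of every set of pairwise
incomparable vertices (the width). -/
theorem stmt_13 {V : Type*} [Fintype V] (E : V → V → Prop)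
    (hacyc : ∀ u v : V, reaches E u v → reaches E v u → u = v)
    (s t : V) (hs : ∀ v, reaches E s v) (ht : ∀ v, reaches E v t)
    (w : ℕ)
    (hw : ∀ A : Finset V,
        (∀ u ∈ A, ∀ v ∈ A, u ≠ v → ¬ reaches E u v ∧ ¬ reaches E v u) →
        A.card ≤ w) :
    ∃ d : ℕ, d ≤ min (Fintype.card V / 2) w ∧
      ∃ D : V → Fin d → ℤ, Function.Injective D ∧
        ∀ u v : V, reaches E u v ↔ ∀ i, D u i ≤ D v i := by
  let _ : PartialOrder V :=
    { le := reaches E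
      le_refl := fun _ => Relation.ReflTransGen.refl
      le_trans := fun _ _ _ => Relation.ReflTransGen.trans
      le_antisymm := hacyc }
  obtain ⟨d, hd, ⟨D⟩⟩ := DominanceDrawing.exists_orderEmbedding_fin_le_min (V := V) hs ht
    fun A hA => hw A fun u hu v hv huv => ⟨hA hu hv huv, hA hv hu huv.symm⟩
  exact ⟨d, hd, D, D.injective, fun u v => D.le_iff_le.symm⟩
end

section
/- Given a finite set V with an injective map D : V → ℤ^k such that u reaches v iff D(u) ≤ D(v) componentwise (a k-dimensional dominance drawing of a DAG G), there exists a map D' : V → ℤ^k which is still a dominance drawing of G and additionally each coordinate function D'_i is injective on V. -/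
theorem exists_monotone_equiv_fin_card (α : Type*) [PartialOrder α] [Fintype α] :
    ∃ e : α ≃ Fin (Fintype.card α), Monotone e := by
  let : Fintype (LinearExtension α) := ‹Fintype α›
  let e := (monoEquivOfFin (LinearExtension α) rfl).symm
  exact ⟨(Equiv.refl α).trans e.toEquiv, e.monotone.comp toLinearExtension.monotone⟩

theorem Int.ediv_mul_add_eq {n : ℕ} {s : ℕ} (hs : s < n) (a : ℤ) : ((n : ℤ) * a + s) / n = a := by
  rw [Int.mul_add_ediv_left _ _ (by omega), Int.ediv_eq_zero_of_lt (by omega) (by omega),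
    add_zero]

theorem Int.le_of_mul_add_le_mul_add {n s t : ℕ} (hs : s < n) (ht : t < n) {a b : ℤ}
    (h : (n : ℤ) * a + s ≤ n * b + t) : a ≤ b := by
  rw [← Int.ediv_mul_add_eq hs a, ← Int.ediv_mul_add_eq ht b]
  exact Int.ediv_le_ediv (by omega) h

section TieBreak

variable {V ι : Type*} {n : ℕ} (D : V → ι → ℤ) {g : V → ℕ}

def tieBreak (n : ℕ) (D : V → ι → ℤ) (g : V → ℕ) : V → ι → ℤ :=
  fun v i => n * D v i + g v

theorem tieBreak_le_tieBreak_iff (hgn : ∀ v, g v < n) (hg : ∀ u v, D u ≤ D v → g u ≤ g v)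
    {u v : V} : tieBreak n D g u ≤ tieBreak n D g v ↔ D u ≤ D v := by
  refine ⟨fun h i => Int.le_of_mul_add_le_mul_add (hgn u) (hgn v) (h i), fun h i => ?_⟩
  have hD : (n : ℤ) * D u i ≤ n * D v i := mul_le_mul_of_nonneg_left (h i) (by positivity)
  have hgle : (g u : ℤ) ≤ g v := by exact_mod_cast hg u v h
  exact add_le_add hD hgle

theorem tieBreak_apply_injective (hgn : ∀ v, g v < n) (hg : Function.Injective g) (i : ι) :
    Function.Injective (fun v => tieBreak n D g v i) := by
  intro u v h
  have hle := Int.le_of_mul_add_le_mul_add (hgn u) (hgn v) h.le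
  have hge := Int.le_of_mul_add_le_mul_add (hgn v) (hgn u) h.ge
  have hD : D u i = D v i := le_antisymm hle hge
  simp only [tieBreak, hD, add_right_inj, Nat.cast_inj] at h
  exact hg h

end TieBreak

/-- Every k-dimensional dominance drawing of a finite DAG can be converted to a
k-dimensional dominance drawing with distinct coordinates: each coordinate
function is injective. -/
theorem stmt_18 {V : Type*} [Fintype V] (E : V → V → Prop) (k : ℕ)
    (D : V → Fin k → ℤ) (hinj : Function.Injective D)
    (hdom : ∀ u v : V, reaches E u v ↔ ∀ i, D u i ≤ D v i) :
    ∃ D' : V → Fin k → ℤ, Function.Injective D' ∧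
      (∀ u v : V, reaches E u v ↔ ∀ i, D' u i ≤ D' v i) ∧
      ∀ i, Function.Injective (fun v => D' v i) := by
  let : PartialOrder V := PartialOrder.lift D hinj
  obtain ⟨e, he⟩ := exists_monotone_equiv_fin_card V
  let g : V → ℕ := fun v => e v
  have hgn : ∀ v, g v < Fintype.card V := fun v => (e v).isLt
  have hg : ∀ u v, D u ≤ D v → g u ≤ g v := fun u v h => he h
  have hle : ∀ u v, tieBreak _ D g u ≤ tieBreak _ D g v ↔ D u ≤ D v :=
    fun u v => tieBreak_le_tieBreak_iff D hgn hg
  refine ⟨tieBreak _ D g, fun u v h => hinj ?_, fun u v => (hdom u v).trans (hle u v).symm,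
    tieBreak_apply_injective D hgn (Fin.val_injective.comp e.injective)⟩
  exact le_antisymm ((hle u v).1 h.le) ((hle v u).1 h.ge)
end
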